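/- arXiv:1012.5274 — 3 statements merged into one kernel-verified Lean document; each statement's English description precedes it below -/
import Mathlib

section
/- Let V : ℝⁿ → ℝ be smooth and μ the probability measure with density e^{-V}, and let U be a bounded open subset of ℝⁿ. If λ > 0 and W : ℝⁿ → ℝ is a smooth function with W ≥ 1 satisfying ΔW − ∇V·∇W ≤ −λW on the complement of the closure of U, then for every smooth f compactly supported in the complement of the closure of U one has λ ∫ f² dμ ≤ ∫ |∇f|² dμ. Consequently, the supremum of all λ > 0 for which such a Lyapunov function W exists is finite. -/
/-! With `h = f² / W`, the Lyapunov inequality gives `λ f² ≤ -(L_V W) h` on the support of `f`,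
where `L_V W = ΔW - ⟪∇V, ∇W⟫`. Since `L_V` is symmetric in `L²(e^{-V} dx)`, integrating turns the
right-hand side into `∫ ⟪∇W, ∇h⟫ dμ`, and completing the square bounds this by `∫ ‖∇f‖² dμ`.
Every admissible `λ` is therefore at most the Rayleigh quotient of one fixed bump function
supported outside `closure U`, which exists because `closure U` is bounded and `n > 0`. -/

open MeasureTheory Real
open scoped ENNReal RealInnerProductSpace

/-- The Euclidean Laplacian `Δ W = ∑ i ∂²_{ii} W` of a function on `ℝⁿ`. -/
noncomputable def euclideanLaplacian {n : ℕ} (W : EuclideanSpace ℝ (Fin n) → ℝ)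
    (x : EuclideanSpace ℝ (Fin n)) : ℝ :=
  ∑ i : Fin n,
    fderiv ℝ (fun y => fderiv ℝ W y (EuclideanSpace.single i 1)) x (EuclideanSpace.single i 1)

open Function Set Topology

section GibbsMeasure

variable {F : Type*} [MeasureSpace F]

noncomputable def gibbsMeasure (V : F → ℝ) : Measure F :=
  volume.withDensity fun x => ENNReal.ofReal (exp (-V x))

theorem integral_gibbsMeasure {V : F → ℝ} (hV : Measurable V) (g : F → ℝ) :
    ∫ x, g x ∂gibbsMeasure V = ∫ x, g x * exp (-V x) := by
  rw [gibbsMeasure, integral_withDensity_eq_integral_toReal_smul (by fun_prop) (by simp)]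
  simp [ENNReal.toReal_ofReal (exp_nonneg _), mul_comm]

theorem exists_contDiff_tsupport_subset_integral_sq_gibbsMeasure_pos [NormedAddCommGroup F]
    [NormedSpace ℝ F] [FiniteDimensional ℝ F] [BorelSpace F]
    [(volume : Measure F).IsOpenPosMeasure] [IsFiniteMeasureOnCompacts (volume : Measure F)]
    {V : F → ℝ} (hV : Continuous V) {s : Set F} {x : F} (hs : s ∈ 𝓝 x) :
    ∃ f : F → ℝ, ContDiff ℝ (⊤ : ℕ∞) f ∧ HasCompactSupport f ∧ tsupport f ⊆ s ∧
      0 < ∫ y, f y ^ 2 ∂gibbsMeasure V := by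
  obtain ⟨f, hfs, hfc, hf, -, hfx⟩ := exists_contDiff_tsupport_subset (n := ⊤) hs
  refine ⟨f, hf, hfc, hfs, ?_⟩
  rw [integral_gibbsMeasure hV.measurable]
  have hsupp : support (fun y => f y ^ 2 * exp (-V y)) ⊆ support f :=
    support_subset_iff'.2 fun y hy => by simp [notMem_support.1 hy]
  exact ((hf.continuous.pow 2).mul (continuous_exp.comp hV.neg)
    ).integral_pos_of_hasCompactSupport_nonneg_nonzero (x := x) (hfc.mono hsupp)
    (fun y => by positivity) (by simp [hfx])

end GibbsMeasure

section Gradient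

variable {F : Type*} [NormedAddCommGroup F] [InnerProductSpace ℝ F] [CompleteSpace F]

theorem ContDiff.continuous_gradient {f : F → ℝ} (hf : ContDiff ℝ 1 f) :
    Continuous (gradient f) :=
  (InnerProductSpace.toDual ℝ F).symm.continuous.comp (hf.continuous_fderiv one_ne_zero)

theorem gradient_eq_zero_of_notMem_tsupport {f : F → ℝ} {x : F} (hx : x ∉ tsupport f) :
    gradient f x = 0 := by
  simp [gradient, fderiv_of_notMem_tsupport ℝ hx]

theorem inner_gradient_mul_exp_neg {h V : F → ℝ} {x : F} (hh : DifferentiableAt ℝ h x)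
    (hV : DifferentiableAt ℝ V x) (u : F) :
    ⟪u, gradient (fun y => h y * exp (-V y)) x⟫ =
      (⟪u, gradient h x⟫ - h x * ⟪u, gradient V x⟫) * exp (-V x) := by
  have hd : HasFDerivAt (fun y => h y * exp (-V y))
      (h x • (exp (-V x) • -fderiv ℝ V x) + exp (-V x) • fderiv ℝ h x) x :=
    hh.hasFDerivAt.mul hV.hasFDerivAt.neg.exp
  simp only [inner_gradient_right, hd.fderiv, smul_neg, add_apply, neg_apply, smul_apply,
    smul_eq_mul, conj_trivial]
  ring

/-- Completing the square: `∇(f²/W) = 2t∇f − t²∇W` with `t = f/W`, and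
`2t⟪∇W, ∇f⟫ − t²‖∇W‖² ≤ ‖∇f‖²` because `‖∇f − t∇W‖² ≥ 0`. -/
theorem inner_gradient_sq_div_le {f W : F → ℝ} {x : F} (hf : DifferentiableAt ℝ f x)
    (hW : DifferentiableAt ℝ W x) (hWx : W x ≠ 0) :
    ⟪gradient W x, gradient (fun y => f y ^ 2 / W y) x⟫ ≤ ‖gradient f x‖ ^ 2 := by
  set t := f x / W x
  have hd := (hf.hasFDerivAt.pow 2).mul ((hasDerivAt_inv hWx).comp_hasFDerivAt x hW.hasFDerivAt)
  have hq : (fun y => f y ^ 2 / W y) = (fun y => f y ^ 2) * (fun y => y⁻¹) ∘ W := by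
    ext y; simp [div_eq_mul_inv]
  have hinner : ⟪gradient W x, gradient (fun y => f y ^ 2 / W y) x⟫ =
      2 * t * ⟪gradient f x, gradient W x⟫ - t ^ 2 * ‖gradient W x‖ ^ 2 := by
    rw [hq, inner_gradient_right, hd.fderiv]
    simp only [add_apply, smul_apply, smul_eq_mul, comp_apply, nsmul_eq_mul,
      ← inner_gradient_left, real_inner_self_eq_norm_sq]
    simp only [t, conj_trivial]
    field_simp
    ring
  have hsq := norm_sub_sq_real (gradient f x) (t • gradient W x)
  rw [inner_smul_right, norm_smul, Real.norm_eq_abs, mul_pow, sq_abs] at hsq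
  rw [hinner]
  linarith [sq_nonneg ‖gradient f x - t • gradient W x‖]

theorem integrable_inner_gradient_mul [MeasurableSpace F] [BorelSpace F] {μ : Measure F}
    [IsFiniteMeasureOnCompacts μ] {W h ρ : F → ℝ} (hW : ContDiff ℝ 1 W) (hh : ContDiff ℝ 1 h)
    (hhc : HasCompactSupport h) (hρ : Continuous ρ) :
    Integrable (fun x => ⟪gradient W x, gradient h x⟫ * ρ x) μ := by
  refine ((hW.continuous_gradient.inner hh.continuous_gradient).mul hρ
    ).integrable_of_hasCompactSupport (hhc.mono' (support_subset_iff'.2 fun x hx => ?_))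
  simp only [Pi.mul_apply, gradient_eq_zero_of_notMem_tsupport hx, inner_zero_right, zero_mul]

end Gradient

section Euclidean

variable {n : ℕ}

local notation "E" => EuclideanSpace ℝ (Fin n)
local notation "e" i => EuclideanSpace.single i (1 : ℝ)

noncomputable def driftLaplacian (V W : E → ℝ) (x : E) : ℝ :=
  euclideanLaplacian W x - ⟪gradient V x, gradient W x⟫

theorem inner_gradient_eq_sum_fderiv_single (f g : E → ℝ) (x : E) :
    ⟪gradient f x, gradient g x⟫ = ∑ i : Fin n, fderiv ℝ f x (e i) * fderiv ℝ g x (e i) := by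
  simp only [← inner_gradient_left, PiLp.inner_apply]
  simp [mul_comm]

theorem ContDiff.continuous_euclideanLaplacian {W : E → ℝ} (hW : ContDiff ℝ 2 W) :
    Continuous (euclideanLaplacian W) :=
  continuous_finsetSum _ fun _ _ =>
    ((((hW.fderiv_right le_rfl).clm_apply contDiff_const).continuous_fderiv one_ne_zero).clm_apply
      continuous_const)

theorem integral_euclideanLaplacian_mul {W g : E → ℝ} (hW : ContDiff ℝ 2 W) (hg : ContDiff ℝ 1 g)
    (hgc : HasCompactSupport g) :
    ∫ x, euclideanLaplacian W x * g x = -∫ x, ⟪gradient W x, gradient g x⟫ := by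
  have hdW (v : E) : ContDiff ℝ 1 fun x => fderiv ℝ W x v :=
    (hW.fderiv_right le_rfl).clm_apply contDiff_const
  have hdg (v : E) : Continuous fun x => fderiv ℝ g x v :=
    (hg.continuous_fderiv one_ne_zero).clm_apply continuous_const
  have hdgc (v : E) : HasCompactSupport fun x => fderiv ℝ g x v :=
    (hgc.fderiv ℝ).comp_left (g := fun L : E →L[ℝ] ℝ => L v) rfl
  have int2 (i : Fin n) : Integrable fun x =>
      fderiv ℝ (fun y => fderiv ℝ W y (e i)) x (e i) * g x :=
    ((((hdW _).continuous_fderiv one_ne_zero).clm_apply continuous_const).mul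
      hg.continuous).integrable_of_hasCompactSupport hgc.mul_left
  have int1 (i : Fin n) : Integrable fun x => fderiv ℝ W x (e i) * fderiv ℝ g x (e i) :=
    ((hdW _).continuous.mul (hdg _)).integrable_of_hasCompactSupport (hdgc _).mul_left
  have coord (i : Fin n) : ∫ x, fderiv ℝ (fun y => fderiv ℝ W y (e i)) x (e i) * g x =
      -∫ x, fderiv ℝ W x (e i) * fderiv ℝ g x (e i) := by
    rw [integral_mul_fderiv_eq_neg_fderiv_mul_of_integrable (int2 i) (int1 i)
      (((hdW _).continuous.mul hg.continuous).integrable_of_hasCompactSupport hgc.mul_left)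
      (fun x _ => ((hdW _).differentiable one_ne_zero) x)
      (fun x _ => (hg.differentiable one_ne_zero) x), neg_neg]
  simp only [euclideanLaplacian, Finset.sum_mul, inner_gradient_eq_sum_fderiv_single]
  rw [integral_finsetSum _ fun i _ => int2 i, integral_finsetSum _ fun i _ => int1 i,
    ← Finset.sum_neg_distrib]
  exact Finset.sum_congr rfl fun i _ => coord i

theorem integral_driftLaplacian_mul_exp_neg {V W h : E → ℝ} (hV : ContDiff ℝ 1 V)
    (hW : ContDiff ℝ 2 W) (hh : ContDiff ℝ 1 h) (hhc : HasCompactSupport h) :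
    ∫ x, driftLaplacian V W x * h x * exp (-V x) =
      -∫ x, ⟪gradient W x, gradient h x⟫ * exp (-V x) := by
  have hρ : ContDiff ℝ 1 fun x => exp (-V x) := hV.neg.exp
  have hW1 : ContDiff ℝ 1 W := hW.of_le (by norm_num)
  have hdrift : Integrable fun x => ⟪gradient V x, gradient W x⟫ * h x * exp (-V x) :=
    (((hV.continuous_gradient.inner hW1.continuous_gradient).mul hh.continuous).mul
      hρ.continuous).integrable_of_hasCompactSupport hhc.mul_left.mul_right
  have hgrad := integrable_inner_gradient_mul (μ := volume) hW1 hh hhc hρ.continuous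
  have hlap : Integrable fun x => euclideanLaplacian W x * (h x * exp (-V x)) :=
    (hW.continuous_euclideanLaplacian.mul (hh.continuous.mul hρ.continuous)
      ).integrable_of_hasCompactSupport hhc.mul_right.mul_left
  have hgreen := integral_euclideanLaplacian_mul hW (hh.mul hρ) hhc.mul_right
  simp only [inner_gradient_mul_exp_neg (hh.differentiable one_ne_zero _)
    (hV.differentiable one_ne_zero _)] at hgreen
  have hsplit : ∫ x, (⟪gradient W x, gradient h x⟫ - h x * ⟪gradient W x, gradient V x⟫) *
      exp (-V x) = (∫ x, ⟪gradient W x, gradient h x⟫ * exp (-V x)) -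
        ∫ x, ⟪gradient V x, gradient W x⟫ * h x * exp (-V x) := by
    rw [← integral_sub hgrad hdrift]
    congr 1 with x
    rw [real_inner_comm (gradient V x)]
    ring
  calc ∫ x, driftLaplacian V W x * h x * exp (-V x)
      = ∫ x, (euclideanLaplacian W x * (h x * exp (-V x)) -
          ⟪gradient V x, gradient W x⟫ * h x * exp (-V x)) := by
        congr 1 with x
        rw [driftLaplacian]
        ring
    _ = -∫ x, ⟪gradient W x, gradient h x⟫ * exp (-V x) := by
        rw [integral_sub hlap hdrift, hgreen, hsplit]
        ring

theorem mul_integral_mul_exp_neg_le_integral_inner_gradient {V W h : E → ℝ} {lam : ℝ}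
    (hV : ContDiff ℝ 1 V) (hW : ContDiff ℝ 2 W) (hh : ContDiff ℝ 1 h) (hhc : HasCompactSupport h)
    (hh0 : ∀ x, 0 ≤ h x) (hL : ∀ x ∈ tsupport h, driftLaplacian V W x ≤ -lam * W x) :
    lam * ∫ x, W x * h x * exp (-V x) ≤ ∫ x, ⟪gradient W x, gradient h x⟫ * exp (-V x) := by
  have hW1 : ContDiff ℝ 1 W := hW.of_le (by norm_num)
  have hρ : Continuous fun x => exp (-V x) := continuous_exp.comp hV.continuous.neg
  rw [← integral_const_mul, ← neg_neg (∫ x, ⟪gradient W x, gradient h x⟫ * exp (-V x)),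
    ← integral_driftLaplacian_mul_exp_neg hV hW hh hhc, ← integral_neg]
  refine integral_mono (((hW1.continuous.mul hh.continuous).mul hρ).const_mul lam
    |>.integrable_of_hasCompactSupport hhc.mul_left.mul_right.mul_left)
    ((((hW.continuous_euclideanLaplacian.sub (hV.continuous_gradient.inner
      hW1.continuous_gradient)).mul hh.continuous).mul hρ).neg.integrable_of_hasCompactSupport
      hhc.mul_left.mul_right.neg) fun x => ?_
  by_cases hx : x ∈ tsupport h
  · have hhρ : 0 ≤ h x * exp (-V x) := mul_nonneg (hh0 x) (exp_pos _).le
    calc lam * (W x * h x * exp (-V x)) = lam * W x * (h x * exp (-V x)) := by ring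
      _ ≤ -driftLaplacian V W x * (h x * exp (-V x)) :=
          mul_le_mul_of_nonneg_right (by linarith [hL x hx]) hhρ
      _ = _ := by ring
  · simp [image_eq_zero_of_notMem_tsupport hx]

theorem mul_integral_sq_le_integral_norm_gradient_sq_of_driftLaplacian_le {V W f : E → ℝ}
    {lam : ℝ} (hV : ContDiff ℝ 1 V) (hW : ContDiff ℝ 2 W) (hW0 : ∀ x, 0 < W x)
    (hf : ContDiff ℝ 1 f) (hfc : HasCompactSupport f)
    (hL : ∀ x ∈ tsupport f, driftLaplacian V W x ≤ -lam * W x) :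
    lam * ∫ x, f x ^ 2 ∂gibbsMeasure V ≤ ∫ x, ‖gradient f x‖ ^ 2 ∂gibbsMeasure V := by
  set h : E → ℝ := fun y => f y ^ 2 / W y with h_def
  have hW1 : ContDiff ℝ 1 W := hW.of_le (by norm_num)
  have hh : ContDiff ℝ 1 h := (hf.pow 2).div hW1 fun x => (hW0 x).ne'
  have hsupp : support h ⊆ support f :=
    support_subset_iff'.2 fun x hx => by simp [h, notMem_support.1 hx]
  have hρ : Continuous fun x => exp (-V x) := continuous_exp.comp hV.continuous.neg
  have hVm : Measurable V := hV.continuous.measurable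
  rw [integral_gibbsMeasure hVm, integral_gibbsMeasure hVm]
  calc lam * ∫ x, f x ^ 2 * exp (-V x) = lam * ∫ x, W x * h x * exp (-V x) := by
        congr 2 with x
        simp only [h_def]
        field_simp [(hW0 x).ne']
    _ ≤ ∫ x, ⟪gradient W x, gradient h x⟫ * exp (-V x) :=
        mul_integral_mul_exp_neg_le_integral_inner_gradient hV hW hh (hfc.mono hsupp)
          (fun x => by have := hW0 x; positivity) fun x hx => hL x (closure_mono hsupp hx)
    _ ≤ ∫ x, ‖gradient f x‖ ^ 2 * exp (-V x) := by
        refine integral_mono ?_ ?_ fun x => mul_le_mul_of_nonneg_right (inner_gradient_sq_div_le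
          (hf.differentiable one_ne_zero x) (hW1.differentiable one_ne_zero x) (hW0 x).ne')
          (exp_pos _).le
        · exact integrable_inner_gradient_mul hW1 hh (hfc.mono hsupp) hρ
        · refine ((hf.continuous_gradient.norm.pow 2).mul hρ).integrable_of_hasCompactSupport
            (hfc.mono' (support_subset_iff'.2 fun x hx => ?_))
          simp [gradient_eq_zero_of_notMem_tsupport hx]

end Euclidean

theorem lyapunov_rate_bounded_general
    {n : ℕ} (hn : 0 < n)
    (V : EuclideanSpace ℝ (Fin n) → ℝ) (hV : ContDiff ℝ (⊤ : ℕ∞) V)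
    (μ : Measure (EuclideanSpace ℝ (Fin n)))
    (hμ : μ = volume.withDensity fun x => ENNReal.ofReal (Real.exp (-V x)))
    (U : Set (EuclideanSpace ℝ (Fin n))) (hUb : Bornology.IsBounded U) :
    (∀ lam : ℝ, 0 < lam →
      ∀ W : EuclideanSpace ℝ (Fin n) → ℝ, ContDiff ℝ (⊤ : ℕ∞) W → (∀ x, 1 ≤ W x) →
        (∀ x ∉ closure U,
          euclideanLaplacian W x - ⟪gradient V x, gradient W x⟫ ≤ -lam * W x) →
      ∀ f : EuclideanSpace ℝ (Fin n) → ℝ, ContDiff ℝ (⊤ : ℕ∞) f → HasCompactSupport f →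
        tsupport f ⊆ (closure U)ᶜ →
        lam * ∫ x, (f x) ^ 2 ∂μ ≤ ∫ x, ‖gradient f x‖ ^ 2 ∂μ) ∧
    BddAbove {lam : ℝ | 0 < lam ∧
      ∃ W : EuclideanSpace ℝ (Fin n) → ℝ, ContDiff ℝ (⊤ : ℕ∞) W ∧ (∀ x, 1 ≤ W x) ∧
        ∀ x ∉ closure U,
          euclideanLaplacian W x - ⟪gradient V x, gradient W x⟫ ≤ -lam * W x} := by
  change μ = gibbsMeasure V at hμ
  subst hμ
  have le_smooth (m : ℕ) : (m : WithTop ℕ∞) ≤ ((⊤ : ℕ∞) : WithTop ℕ∞) := by exact_mod_cast le_top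
  have poincare {lam : ℝ} {W : EuclideanSpace ℝ (Fin n) → ℝ} (hW : ContDiff ℝ (⊤ : ℕ∞) W)
      (hW1 : ∀ x, 1 ≤ W x) (hL : ∀ x ∉ closure U, driftLaplacian V W x ≤ -lam * W x)
      {f : EuclideanSpace ℝ (Fin n) → ℝ} (hf : ContDiff ℝ (⊤ : ℕ∞) f) (hfc : HasCompactSupport f)
      (hfU : tsupport f ⊆ (closure U)ᶜ) :
      lam * ∫ x, f x ^ 2 ∂gibbsMeasure V ≤ ∫ x, ‖gradient f x‖ ^ 2 ∂gibbsMeasure V :=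
    mul_integral_sq_le_integral_norm_gradient_sq_of_driftLaplacian_le (hV.of_le (le_smooth 1))
      (hW.of_le (le_smooth 2)) (fun x => one_pos.trans_le (hW1 x)) (hf.of_le (le_smooth 1)) hfc
      fun x hx => hL x (hfU hx)
  refine ⟨fun lam _ W hW hW1 hL f hf hfc hfU => poincare hW hW1 hL hf hfc hfU, ?_⟩
  have : Nonempty (Fin n) := ⟨⟨0, hn⟩⟩
  obtain ⟨x₀, hx₀⟩ : (closure U)ᶜ.Nonempty := nonempty_compl.2 fun hU =>
    NormedSpace.unbounded_univ ℝ (EuclideanSpace ℝ (Fin n)) (hU ▸ hUb.closure)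
  obtain ⟨f, hf, hfc, hfU, hpos⟩ := exists_contDiff_tsupport_subset_integral_sq_gibbsMeasure_pos
    hV.continuous (isClosed_closure.isOpen_compl.mem_nhds hx₀)
  refine ⟨(∫ x, ‖gradient f x‖ ^ 2 ∂gibbsMeasure V) / ∫ x, f x ^ 2 ∂gibbsMeasure V, ?_⟩
  rintro lam ⟨-, W, hW, hW1, hL⟩
  exact (le_div_iff₀ hpos).2 (poincare hW hW1 hL hf hfc hfU)

/-- If `W ≥ 1` is smooth and satisfies `ΔW − ∇V·∇W ≤ −λW` outside the closure
of a bounded open set `U`, then `λ ∫ f² dμ ≤ ∫ |∇f|² dμ` for every smooth `f` compactly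
supported in the complement of the closure of `U`.  Consequently the set of `λ > 0` for which
such a Lyapunov function exists is bounded above. -/
theorem lyapunov_rate_bounded
    {n : ℕ} (hn : 0 < n)
    (V : EuclideanSpace ℝ (Fin n) → ℝ) (hV : ContDiff ℝ (⊤ : ℕ∞) V)
    (μ : Measure (EuclideanSpace ℝ (Fin n)))
    (hμ : μ = volume.withDensity fun x => ENNReal.ofReal (Real.exp (-V x)))
    (hprob : IsProbabilityMeasure μ)
    (U : Set (EuclideanSpace ℝ (Fin n))) (hUo : IsOpen U) (hUb : Bornology.IsBounded U) :
    (∀ lam : ℝ, 0 < lam →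
      ∀ W : EuclideanSpace ℝ (Fin n) → ℝ, ContDiff ℝ (⊤ : ℕ∞) W → (∀ x, 1 ≤ W x) →
        (∀ x ∉ closure U,
          euclideanLaplacian W x - ⟪gradient V x, gradient W x⟫ ≤ -lam * W x) →
      ∀ f : EuclideanSpace ℝ (Fin n) → ℝ, ContDiff ℝ (⊤ : ℕ∞) f → HasCompactSupport f →
        tsupport f ⊆ (closure U)ᶜ →
        lam * ∫ x, (f x) ^ 2 ∂μ ≤ ∫ x, ‖gradient f x‖ ^ 2 ∂μ) ∧
    BddAbove {lam : ℝ | 0 < lam ∧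
      ∃ W : EuclideanSpace ℝ (Fin n) → ℝ, ContDiff ℝ (⊤ : ℕ∞) W ∧ (∀ x, 1 ≤ W x) ∧
        ∀ x ∉ closure U,
          euclideanLaplacian W x - ⟪gradient V x, gradient W x⟫ ≤ -lam * W x} :=
  lyapunov_rate_bounded_general hn V hV μ hμ U hUb
end

section
/- Let μ(dx) = Z^{-1} e^{-V(x)} dx be a probability measure on ℝ with ∫ x dμ = 0, where V attains its minimum at a ∈ ℝ. Suppose V is β-superlinear with constants c_β > 0 and h_β ≥ 0, associated with the numbers R₊(β), R₋(β) > 0 and R(β) = max(R₊(β), R₋(β)). Then R₊²(β) ∨ R₋²(β) ≤ 12 · Var_μ(x) · e^{β} · ( 1 + 2 e^{h_β}/c_β ). -/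
/-!
Let `L = R₊ + R₋` and `I = [a - R₋, a + R₊]`. On `I` the sublevel condition gives
`e^{-V} ≥ e^{-V(a) - β}`, and an interval of length `L` has second moment
`∫_I x² dx ≥ L³/12` (its length times its variance), so since `μ` is centred
`Var_μ(x) = Z⁻¹ ∫ x² e^{-V} ≥ Z⁻¹ e^{-V(a) - β} L³/12`.
In the other direction, `e^{-V} ≤ e^{-V(a)}` on `I`, and on each tail the linear lower bound on
`V` makes `e^{-V}` at most an exponential of rate `k = c/R` whose integral is `e^{h - V(a)}/k`;
as `R ≤ L` this gives `Z ≤ e^{-V(a)} L (1 + 2e^h/c)`. The two bounds combine to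
`L² ≤ 12 Var_μ(x) e^β (1 + 2e^h/c)`, and `R₊², R₋² ≤ L²`.
The same exponential tails make `x² e^{-V}` integrable, so `∫ x² dμ` is not a junk value.
-/

open MeasureTheory Set Filter Real

theorem integral_withDensity_ofReal {α E : Type*} [MeasurableSpace α] [NormedAddCommGroup E]
    [NormedSpace ℝ E] {μ : Measure α} {ρ : α → ℝ} (hρ : Measurable ρ)
    (hρ_nonneg : ∀ x, 0 ≤ ρ x) (g : α → E) :
    ∫ x, g x ∂μ.withDensity (fun x => ENNReal.ofReal (ρ x)) = ∫ x, ρ x • g x ∂μ := by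
  rw [integral_withDensity_eq_integral_toReal_smul hρ.ennreal_ofReal
    (ae_of_all _ fun _ => ENNReal.ofReal_lt_top)]
  simp_rw [ENNReal.toReal_ofReal (hρ_nonneg _)]

theorem sub_pow_three_div_twelve_le_integral_sq {p q : ℝ} (hpq : p ≤ q) :
    (q - p) ^ 3 / 12 ≤ ∫ x in p..q, x ^ 2 := by
  rw [integral_pow]
  nlinarith [mul_nonneg (sub_nonneg.2 hpq) (sq_nonneg (p + q))]

section ExponentialTails

variable {f : ℝ → ℝ} {q k C : ℝ}

theorem integrableOn_Iic_of_integrableOn_Ioi_comp_neg {E : Type*} [NormedAddCommGroup E]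
    {g : ℝ → E} {p : ℝ} (hg : IntegrableOn (fun x => g (-x)) (Ioi (-p))) :
    IntegrableOn g (Iic p) := by
  rw [← (Measure.measurePreserving_neg volume).integrableOn_comp_preimage measurableEmbedding_neg,
    neg_preimage, neg_Iic, integrableOn_Ici_iff_integrableOn_Ioi]
  exact hg

theorem integrableOn_Ioi_pow_mul_exp_neg_mul (n : ℕ) (q : ℝ) (hk : 0 < k) :
    IntegrableOn (fun x => x ^ n * exp (-k * x)) (Ioi q) := by
  refine integrable_of_isBigO_exp_neg (half_pos hk) (by fun_prop) ?_
  refine ((isLittleO_pow_exp_pos_mul_atTop n (half_pos hk)).mul_isBigO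
    (Asymptotics.isBigO_refl (fun x => exp (-k * x)) atTop)).isBigO.congr_right fun x => ?_
  rw [← exp_add]
  ring_nf

theorem integrableOn_Ioi_pow_mul_of_norm_le_mul_exp_neg (n : ℕ) (hk : 0 < k)
    (hf : AEStronglyMeasurable f (volume.restrict (Ioi q)))
    (hle : ∀ x ∈ Ioi q, ‖f x‖ ≤ C * exp (-k * x)) :
    IntegrableOn (fun x => x ^ n * f x) (Ioi q) := by
  refine ((integrableOn_Ioi_pow_mul_exp_neg_mul n q hk).norm.const_mul C).mono'
    ((continuous_pow n).aestronglyMeasurable.mul hf) ?_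
  rw [ae_restrict_iff' measurableSet_Ioi]
  refine ae_of_all _ fun x hx => ?_
  rw [norm_mul, norm_mul, norm_of_nonneg (exp_pos _).le, mul_left_comm]
  exact mul_le_mul_of_nonneg_left (hle x hx) (norm_nonneg _)

theorem setIntegral_Ioi_le_of_le_mul_exp_neg (hk : 0 < k) (hf : IntegrableOn f (Ioi q))
    (hle : ∀ x ∈ Ioi q, f x ≤ C * exp (-k * x)) :
    ∫ x in Ioi q, f x ≤ C * exp (-k * q) / k := by
  calc ∫ x in Ioi q, f x ≤ ∫ x in Ioi q, C * exp (-k * x) :=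
        setIntegral_mono_on hf ((exp_neg_integrableOn_Ioi q hk).const_mul C) measurableSet_Ioi hle
    _ = C * exp (-k * q) / k := by
        rw [integral_const_mul, integral_exp_mul_Ioi (neg_neg_of_pos hk)]
        field_simp

end ExponentialTails

section Potential

variable (V : ℝ → ℝ) {a β k h Rp Rm : ℝ}

theorem exp_neg_le_of_linear_growth {r : ℝ}
    (hV : ∀ t, r ≤ t → k * t - h ≤ V (a + t) - V a) {x : ℝ} (hx : a + r ≤ x) :
    exp (-V x) ≤ exp (h - V a + k * a) * exp (-k * x) := by
  have hgrowth := hV (x - a) (by linarith)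
  rw [add_sub_cancel] at hgrowth
  rw [← exp_add]
  exact exp_le_exp.2 (by linarith)

theorem integrableOn_Ioi_pow_mul_exp_neg_of_linear_growth (n : ℕ) (hVm : Measurable V)
    (hk : 0 < k) {r : ℝ} (hV : ∀ t, r ≤ t → k * t - h ≤ V (a + t) - V a) :
    IntegrableOn (fun x => x ^ n * exp (-V x)) (Ioi (a + r)) :=
  integrableOn_Ioi_pow_mul_of_norm_le_mul_exp_neg n hk hVm.neg.exp.aestronglyMeasurable
    fun _ hx => (norm_of_nonneg (exp_pos _).le).trans_le
      (exp_neg_le_of_linear_growth V hV (le_of_lt hx))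

theorem setIntegral_Ioi_exp_neg_le_of_linear_growth (hk : 0 < k) {r : ℝ} (hr : 0 ≤ r)
    (hV : ∀ t, r ≤ t → k * t - h ≤ V (a + t) - V a)
    (hint : IntegrableOn (fun x => exp (-V x)) (Ioi (a + r))) :
    ∫ x in Ioi (a + r), exp (-V x) ≤ exp (h - V a) / k := by
  refine (setIntegral_Ioi_le_of_le_mul_exp_neg hk hint
    fun x hx => exp_neg_le_of_linear_growth V hV (le_of_lt hx)).trans ?_
  rw [← exp_add]
  gcongr
  nlinarith

/-- The left tail of `V` at `a` is the right tail of `x ↦ V (-x)` at `-a`. -/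
theorem linear_growth_comp_neg (hV : ∀ t, Rm ≤ t → k * t - h ≤ V (a - t) - V a) :
    ∀ t, Rm ≤ t → k * t - h ≤ V (-(-a + t)) - V (-(-a)) := by
  intro t ht
  rw [neg_neg, neg_add, neg_neg, ← sub_eq_add_neg]
  exact hV t ht

theorem apply_le_add_of_mem_Icc (hlevp : ∀ u, 0 ≤ u → u ≤ Rp → V (a + u) - V a ≤ β)
    (hlevm : ∀ u, 0 ≤ u → u ≤ Rm → V (a - u) - V a ≤ β) {x : ℝ}
    (hx : x ∈ Icc (a - Rm) (a + Rp)) : V x ≤ V a + β := by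
  rcases le_total a x with hax | hxa
  · have := hlevp (x - a) (by linarith) (by linarith [hx.2])
    rw [add_sub_cancel] at this
    linarith
  · have := hlevm (a - x) (by linarith) (by linarith [hx.1])
    rw [sub_sub_cancel] at this
    linarith

theorem integrable_pow_mul_exp_neg_of_linear_growth (n : ℕ) (hVm : Measurable V)
    (hmin : ∀ x, V a ≤ V x) (hk : 0 < k) (hRpm : 0 ≤ Rp + Rm)
    (hsupp : ∀ t, Rp ≤ t → k * t - h ≤ V (a + t) - V a)
    (hsupm : ∀ t, Rm ≤ t → k * t - h ≤ V (a - t) - V a) :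
    Integrable fun x => x ^ n * exp (-V x) := by
  have hright := integrableOn_Ioi_pow_mul_exp_neg_of_linear_growth V n hVm hk hsupp
  have hleft : IntegrableOn (fun x => x ^ n * exp (-V x)) (Iic (a - Rm)) := by
    refine integrableOn_Iic_of_integrableOn_Ioi_comp_neg ?_
    have : IntegrableOn (fun x => (-1) ^ n * (x ^ n * exp (-V (-x)))) (Ioi (-a + Rm)) :=
      (integrableOn_Ioi_pow_mul_exp_neg_of_linear_growth (fun x => V (-x)) n
        (hVm.comp measurable_neg) hk (linear_growth_comp_neg V hsupm)).const_mul _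
    rw [neg_sub', sub_neg_eq_add]
    exact this.congr_fun (fun x _ => by rw [neg_pow]; ring) measurableSet_Ioi
  have hmid : IntegrableOn (fun x => x ^ n * exp (-V x)) (Icc (a - Rm) (a + Rp)) := by
    have hcont : Continuous fun x : ℝ => ‖x ^ n‖ * exp (-V a) := by fun_prop
    refine hcont.integrableOn_Icc.mono'
      ((continuous_pow n).aestronglyMeasurable.mul hVm.neg.exp.aestronglyMeasurable) ?_
    refine ae_of_all _ fun x => ?_
    rw [norm_mul, norm_of_nonneg (exp_pos _).le]
    gcongr
    exact hmin x
  rw [← integrableOn_univ, ← Iic_union_Ioi (a := a + Rp),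
    ← Iic_union_Icc_eq_Iic (by linarith : a - Rm ≤ a + Rp)]
  exact (hleft.union hmid).union hright

theorem integral_exp_neg_le_of_linear_growth (hmin : ∀ x, V a ≤ V x)
    (hint : Integrable fun x => exp (-V x)) (hk : 0 < k) (hRp : 0 ≤ Rp) (hRm : 0 ≤ Rm)
    (hsupp : ∀ t, Rp ≤ t → k * t - h ≤ V (a + t) - V a)
    (hsupm : ∀ t, Rm ≤ t → k * t - h ≤ V (a - t) - V a) :
    ∫ x, exp (-V x) ≤ exp (-V a) * (Rp + Rm) + 2 * (exp (h - V a) / k) := by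
  have hright :=
    setIntegral_Ioi_exp_neg_le_of_linear_growth V hk hRp hsupp hint.integrableOn
  have hleft : ∫ x in Iic (a - Rm), exp (-V x) ≤ exp (h - V a) / k := by
    have := setIntegral_Ioi_exp_neg_le_of_linear_growth (fun x => V (-x)) hk hRm
      (linear_growth_comp_neg V hsupm) hint.comp_neg.integrableOn
    rwa [integral_comp_neg_Ioi _ (fun x => exp (-V x)), neg_add, neg_neg,
      ← sub_eq_add_neg] at this
  have hmid : ∫ x in (a - Rm)..(a + Rp), exp (-V x) ≤ exp (-V a) * (Rp + Rm) := by
    calc ∫ x in (a - Rm)..(a + Rp), exp (-V x) ≤ ∫ x in (a - Rm)..(a + Rp), exp (-V a) :=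
          intervalIntegral.integral_mono_on (by linarith) hint.intervalIntegrable
            intervalIntegrable_const fun x _ => exp_le_exp.2 (neg_le_neg (hmin x))
      _ = exp (-V a) * (Rp + Rm) := by
          rw [intervalIntegral.integral_const, smul_eq_mul]
          ring
  rw [← intervalIntegral.integral_Iic_sub_Iic hint.integrableOn hint.integrableOn] at hmid
  rw [← intervalIntegral.integral_Iic_add_Ioi (b := a + Rp) hint.integrableOn hint.integrableOn]
  linarith

theorem le_integral_sq_mul_exp_neg_of_sublevel (hRpm : 0 ≤ Rp + Rm)
    (hlevp : ∀ u, 0 ≤ u → u ≤ Rp → V (a + u) - V a ≤ β)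
    (hlevm : ∀ u, 0 ≤ u → u ≤ Rm → V (a - u) - V a ≤ β)
    (hint : Integrable fun x => x ^ 2 * exp (-V x)) :
    exp (-(V a + β)) * ((Rp + Rm) ^ 3 / 12) ≤ ∫ x, x ^ 2 * exp (-V x) := by
  have hpq : a - Rm ≤ a + Rp := by linarith
  have hcube := sub_pow_three_div_twelve_le_integral_sq hpq
  rw [show a + Rp - (a - Rm) = Rp + Rm by ring] at hcube
  calc exp (-(V a + β)) * ((Rp + Rm) ^ 3 / 12)
      ≤ exp (-(V a + β)) * ∫ x in (a - Rm)..(a + Rp), x ^ 2 :=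
        mul_le_mul_of_nonneg_left hcube (exp_pos _).le
    _ = ∫ x in (a - Rm)..(a + Rp), x ^ 2 * exp (-(V a + β)) := by
        rw [intervalIntegral.integral_mul_const, mul_comm]
    _ ≤ ∫ x in (a - Rm)..(a + Rp), x ^ 2 * exp (-V x) := by
        have hcont : Continuous fun x : ℝ => x ^ 2 * exp (-(V a + β)) := by fun_prop
        refine intervalIntegral.integral_mono_on hpq (hcont.intervalIntegrable _ _)
          hint.intervalIntegrable fun x hx => ?_
        gcongr
        exact apply_le_add_of_mem_Icc V hlevp hlevm hx
    _ ≤ ∫ x, x ^ 2 * exp (-V x) := by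
        rw [intervalIntegral.integral_of_le hpq]
        exact setIntegral_le_integral hint (ae_of_all _ fun x => by positivity)

theorem integral_exp_neg_le_of_superlinear {c : ℝ} (hmin : ∀ x, V a ≤ V x)
    (hint : Integrable fun x => exp (-V x)) (hc : 0 < c) (hRp : 0 < Rp) (hRm : 0 < Rm)
    (hsupp : ∀ t, Rp ≤ t → (c / max Rp Rm) * t - h ≤ V (a + t) - V a)
    (hsupm : ∀ t, Rm ≤ t → (c / max Rp Rm) * t - h ≤ V (a - t) - V a) :
    ∫ x, exp (-V x) ≤ exp (-V a) * (Rp + Rm) * (1 + 2 * exp h / c) := by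
  have hbound := integral_exp_neg_le_of_linear_growth V hmin hint
    (div_pos hc (lt_max_of_lt_left hRp)) hRp.le hRm.le hsupp hsupm
  have htail : exp (h - V a) / (c / max Rp Rm) ≤ exp (-V a) * (exp h * (Rp + Rm) / c) := by
    calc exp (h - V a) / (c / max Rp Rm) = exp (-V a) * (exp h * max Rp Rm / c) := by
          rw [sub_eq_add_neg, exp_add]
          field_simp
      _ ≤ exp (-V a) * (exp h * (Rp + Rm) / c) := by
          gcongr
          exact max_le (by linarith) (by linarith)
  calc ∫ x, exp (-V x)
      ≤ exp (-V a) * (Rp + Rm) + 2 * (exp (-V a) * (exp h * (Rp + Rm) / c)) := by linarith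
    _ = exp (-V a) * (Rp + Rm) * (1 + 2 * exp h / c) := by ring

end Potential

theorem superlinear_radius_upper_bound_general
    (V : ℝ → ℝ) (hVm : Measurable V) (a : ℝ) (hmin : ∀ x, V a ≤ V x)
    (hint : Integrable fun x => Real.exp (-V x))
    (Z : ℝ) (hZ : Z = ∫ x, Real.exp (-V x))
    (μ : Measure ℝ)
    (hμ : μ = volume.withDensity fun x => ENNReal.ofReal (Real.exp (-V x) / Z))
    (hcent : ∫ x, x ∂μ = 0)
    (β c h Rp Rm : ℝ) (hc : 0 < c)
    (hRp : 0 < Rp) (hRm : 0 < Rm)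
    (hlevp : ∀ u, 0 ≤ u → u ≤ Rp → V (a + u) - V a ≤ β)
    (hlevm : ∀ u, 0 ≤ u → u ≤ Rm → V (a - u) - V a ≤ β)
    (hsupp : ∀ t, Rp ≤ t → (c / max Rp Rm) * t - h ≤ V (a + t) - V a)
    (hsupm : ∀ t, Rm ≤ t → (c / max Rp Rm) * t - h ≤ V (a - t) - V a) :
    max (Rp ^ 2) (Rm ^ 2) ≤
      12 * ((∫ x, x ^ 2 ∂μ) - (∫ x, x ∂μ) ^ 2) * Real.exp β * (1 + 2 * Real.exp h / c) := by
  have hk : 0 < c / max Rp Rm := div_pos hc (lt_max_of_lt_left hRp)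
  have hZ_pos : 0 < Z := hZ ▸ integral_exp_pos hint
  have hZ_le : Z ≤ exp (-V a) * (Rp + Rm) * (1 + 2 * exp h / c) :=
    hZ ▸ integral_exp_neg_le_of_superlinear V hmin hint hc hRp hRm hsupp hsupm
  have hsecond : ∫ x, x ^ 2 ∂μ = (∫ x, x ^ 2 * exp (-V x)) / Z := by
    rw [hμ, integral_withDensity_ofReal (ρ := fun x => exp (-V x) / Z) (by fun_prop)
      (fun x => by positivity), ← integral_div]
    simp_rw [smul_eq_mul, div_mul_eq_mul_div, mul_comm]
  have hsecond_lower := le_integral_sq_mul_exp_neg_of_sublevel V (by positivity) hlevp hlevm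
    (integrable_pow_mul_exp_neg_of_linear_growth V 2 hVm hmin hk (by positivity) hsupp hsupm)
  set L := Rp + Rm
  set M := 1 + 2 * exp h / c
  have hexp : exp (-V a) * L ^ 3 * M = 12 * (exp (-(V a + β)) * (L ^ 3 / 12)) * exp β * M := by
    rw [neg_add, exp_add, exp_neg β]
    field_simp
  rw [hcent, hsecond, show 12 * ((∫ x, x ^ 2 * exp (-V x)) / Z - 0 ^ 2) * exp β * M
    = 12 * (∫ x, x ^ 2 * exp (-V x)) * exp β * M / Z by ring, le_div_iff₀ hZ_pos]
  calc max (Rp ^ 2) (Rm ^ 2) * Z ≤ L ^ 2 * (exp (-V a) * L * M) := by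
        gcongr
        exact max_le (by nlinarith) (by nlinarith)
    _ = exp (-V a) * L ^ 3 * M := by ring
    _ ≤ 12 * (∫ x, x ^ 2 * exp (-V x)) * exp β * M := by
        rw [hexp]
        gcongr

/-- Let `μ = Z⁻¹ e^{-V} dx` be a centered probability measure on `ℝ`, `V`
attaining its minimum at `a`, and `V` `β`-superlinear with constants `c_β > 0`, `h_β ≥ 0`
relative to `R₊(β), R₋(β) > 0` and `R(β) = max(R₊, R₋)`.  Then
`R₊² ∨ R₋² ≤ 12 Var_μ(x) e^β (1 + 2 e^{h_β}/c_β)`. -/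
theorem superlinear_radius_upper_bound
    (V : ℝ → ℝ) (hVm : Measurable V) (a : ℝ) (hmin : ∀ x, V a ≤ V x)
    (hint : Integrable fun x => Real.exp (-V x))
    (Z : ℝ) (hZ : Z = ∫ x, Real.exp (-V x))
    (μ : Measure ℝ)
    (hμ : μ = volume.withDensity fun x => ENNReal.ofReal (Real.exp (-V x) / Z))
    (hcent : ∫ x, x ∂μ = 0)
    (β c h Rp Rm : ℝ) (hβ : 0 < β) (hc : 0 < c) (hh : 0 ≤ h)
    (hRp : 0 < Rp) (hRm : 0 < Rm)
    (hlevp : ∀ u, 0 ≤ u → u ≤ Rp → V (a + u) - V a ≤ β)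
    (hlevm : ∀ u, 0 ≤ u → u ≤ Rm → V (a - u) - V a ≤ β)
    (hsupp : ∀ t, Rp ≤ t → (c / max Rp Rm) * t - h ≤ V (a + t) - V a)
    (hsupm : ∀ t, Rm ≤ t → (c / max Rp Rm) * t - h ≤ V (a - t) - V a) :
    max (Rp ^ 2) (Rm ^ 2) ≤
      12 * ((∫ x, x ^ 2 ∂μ) - (∫ x, x ∂μ) ^ 2) * Real.exp β * (1 + 2 * Real.exp h / c) :=
  superlinear_radius_upper_bound_general V hVm a hmin hint Z hZ μ hμ hcent β c h Rp Rm hc hRp hRm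
    hlevp hlevm hsupp hsupm
end

section
/- Let μ(dx) = Z^{-1} e^{-V(x)} dx be a probability measure on ℝ with ∫ x dμ = 0, where V attains its minimum at a ∈ ℝ. Suppose V is β-superlinear with constants c_β > 0 and h_β ≥ 0, associated with the numbers R₊(β), R₋(β) > 0 and R(β) = max(R₊(β), R₋(β)). Then R₊²(β) ∨ R₋²(β) ≥ (1/2) · Var_μ(x) · e^{-β} · ( 1/3 + (e^{h_β}/c_β)(1 + 2/c_β + 2/c_β²) )^{-1}. -/
/-!
The variance is the least mean squared deviation, so `Var_μ(x) ≤ Z⁻¹ ∫ (x - a)² e^{-V}`.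
The level-set bound puts an interval of length `R = max R₊ R₋` next to `a` on which
`e^{-V} ≥ e^{-V(a) - β}`, whence `Z ≥ R e^{-V(a) - β}`. Superlinearity gives
`e^{-V(x)} ≤ e^{-V(a) + h - c|x - a|/R}` outside `[a - R, a + R]`, and `e^{-V} ≤ e^{-V(a)}` inside,
so `∫ (x - a)² e^{-V} ≤ e^{-V(a)} (2R³/3 + 4 e^h R³/c³)`. Dividing,
`Var_μ(x) ≤ 2R² e^β (1/3 + 2e^h/c³)`.
-/

open MeasureTheory Set Real

theorem integrable_comp_abs_of_integrableOn_Ioi {E : Type*} [NormedAddCommGroup E] {f : ℝ → E}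
    (hf : IntegrableOn f (Ioi 0)) : Integrable fun x => f |x| := by
  have hIoi : IntegrableOn (fun x => f |x|) (Ioi 0) :=
    hf.congr_fun (fun x hx => by rw [abs_of_pos (mem_Ioi.mp hx)]) measurableSet_Ioi
  have hIic : IntegrableOn (fun x => f |x|) (Iic 0) := by
    have hneg : MeasurableEmbedding fun x : ℝ => -x := (Homeomorph.neg ℝ).measurableEmbedding
    rw [← Measure.map_neg_eq_self (volume : Measure ℝ), hneg.integrableOn_map_iff]
    simp_rw [Function.comp_def, abs_neg, neg_preimage, neg_Iic, neg_zero]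
    exact (integrableOn_Ici_iff_integrableOn_Ioi).mpr hIoi
  rw [← integrableOn_univ, ← Iic_union_Ioi (a := 0)]
  exact hIic.union hIoi

theorem integrableOn_Ioi_sq_mul_exp_neg_mul {k : ℝ} (hk : 0 < k) :
    IntegrableOn (fun t => t ^ 2 * exp (-(k * t))) (Ioi 0) := by
  refine (integrableOn_rpow_mul_exp_neg_mul_rpow (p := 1) (s := 2) (b := k)
    (by norm_num) (by norm_num) hk).congr_fun (fun t _ => ?_) measurableSet_Ioi
  simp only [rpow_one, ← Real.rpow_natCast]
  norm_num

theorem integral_Ioi_sq_mul_exp_neg_mul {k : ℝ} (hk : 0 < k) :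
    ∫ t in Ioi 0, t ^ 2 * exp (-(k * t)) = 2 / k ^ 3 := by
  have h := integral_rpow_mul_exp_neg_mul_Ioi (a := 3) (by norm_num) hk
  have hΓ : Gamma 3 = 2 := by
    rw [show (3 : ℝ) = (2 : ℕ) + 1 by norm_num, Gamma_nat_eq_factorial]; norm_num
  rw [show (3 : ℝ) - 1 = (2 : ℕ) by norm_num, hΓ, show (3 : ℝ) = (3 : ℕ) by norm_num,
    rpow_natCast] at h
  simp only [rpow_natCast] at h
  rw [h]
  field_simp

theorem integrable_sq_mul_exp_neg_mul_abs {k : ℝ} (hk : 0 < k) :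
    Integrable fun x => x ^ 2 * exp (-(k * |x|)) := by
  simpa only [sq_abs] using
    integrable_comp_abs_of_integrableOn_Ioi (integrableOn_Ioi_sq_mul_exp_neg_mul hk)

theorem integral_sq_mul_exp_neg_mul_abs {k : ℝ} (hk : 0 < k) :
    ∫ x, x ^ 2 * exp (-(k * |x|)) = 4 / k ^ 3 := by
  have h := integral_comp_abs (f := fun t => t ^ 2 * exp (-(k * t)))
  simp only [sq_abs] at h
  rw [h, integral_Ioi_sq_mul_exp_neg_mul hk]
  ring

theorem integral_indicator_Icc_sq {r : ℝ} (hr : 0 ≤ r) :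
    ∫ x, (Icc (-r) r).indicator (fun x => x ^ 2) x = 2 * r ^ 3 / 3 := by
  rw [integral_indicator measurableSet_Icc, integral_Icc_eq_integral_Ioc,
    ← intervalIntegral.integral_of_le (by linarith), integral_pow]
  ring

theorem integrable_indicator_Icc_sq (r : ℝ) :
    Integrable fun x => (Icc (-r) r).indicator (fun x => x ^ 2) x :=
  (integrable_indicator_iff measurableSet_Icc).mpr (continuous_pow 2).integrableOn_Icc

theorem integral_sq_mul_le_of_le_exp_neg_abs {φ : ℝ → ℝ} {a r k A B : ℝ}
    (hφ : AEStronglyMeasurable φ) (hφ0 : ∀ x, 0 ≤ φ x) (hr : 0 ≤ r) (hk : 0 < k)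
    (hcore : ∀ x, |x - a| ≤ r → φ x ≤ A)
    (htail : ∀ x, r < |x - a| → φ x ≤ B * exp (-(k * |x - a|))) :
    Integrable (fun x => (x - a) ^ 2 * φ x) ∧
      ∫ x, (x - a) ^ 2 * φ x ≤ A * (2 * r ^ 3 / 3) + B * (4 / k ^ 3) := by
  have hB : 0 ≤ B := by
    have hfar : r < |a + (r + 1) - a| := by
      rw [add_sub_cancel_left, abs_of_pos (by linarith)]
      linarith
    exact nonneg_of_mul_nonneg_left ((hφ0 _).trans (htail _ hfar)) (exp_pos _)
  set m : ℝ → ℝ := fun t =>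
    A * (Icc (-r) r).indicator (fun t => t ^ 2) t + B * (t ^ 2 * exp (-(k * |t|))) with hm_def
  have hm : Integrable m :=
    ((integrable_indicator_Icc_sq r).const_mul A).add
      ((integrable_sq_mul_exp_neg_mul_abs hk).const_mul B)
  have hdom : ∀ x, (x - a) ^ 2 * φ x ≤ m (x - a) := by
    intro x
    by_cases hx : |x - a| ≤ r
    · have hind : (Icc (-r) r).indicator (fun t => t ^ 2) (x - a) = (x - a) ^ 2 :=
        indicator_of_mem (show x - a ∈ Icc (-r) r from abs_le.mp hx) _
      have htail0 : 0 ≤ B * ((x - a) ^ 2 * exp (-(k * |x - a|))) := by positivity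
      simp only [hm_def, hind]
      nlinarith [mul_le_mul_of_nonneg_left (hcore x hx) (sq_nonneg (x - a))]
    · have hind : (Icc (-r) r).indicator (fun t => t ^ 2) (x - a) = 0 :=
        indicator_of_notMem (show x - a ∉ Icc (-r) r from fun h => hx (abs_le.mpr h)) _
      simp only [hm_def, hind, mul_zero, zero_add]
      rw [mul_left_comm]
      exact mul_le_mul_of_nonneg_left (htail x (not_le.mp hx)) (sq_nonneg _)
  have hint : Integrable fun x => (x - a) ^ 2 * φ x :=
    (hm.comp_sub_right a).mono' (by fun_prop) <| Filter.Eventually.of_forall fun x => by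
      rw [Real.norm_of_nonneg (mul_nonneg (sq_nonneg _) (hφ0 x))]
      exact hdom x
  refine ⟨hint, (integral_mono hint (hm.comp_sub_right a) hdom).trans_eq ?_⟩
  rw [integral_sub_right_eq_self m a, hm_def, integral_add
      ((integrable_indicator_Icc_sq r).const_mul A)
      ((integrable_sq_mul_exp_neg_mul_abs hk).const_mul B),
    integral_const_mul, integral_const_mul, integral_indicator_Icc_sq hr,
    integral_sq_mul_exp_neg_mul_abs hk]

theorem mul_le_integral_of_le_on_Icc {f : ℝ → ℝ} {b d m : ℝ} (hf : Integrable f)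
    (hf0 : 0 ≤ f) (hbd : b ≤ d) (hm : ∀ x ∈ Icc b d, m ≤ f x) : (d - b) * m ≤ ∫ x, f x := by
  calc (d - b) * m = m * volume.real (Icc b d) := by
        rw [Real.volume_real_Icc_of_le hbd, mul_comm]
    _ ≤ ∫ x in Icc b d, f x :=
        setIntegral_ge_of_const_le_real measurableSet_Icc measure_Icc_lt_top.ne hm hf.integrableOn
    _ ≤ ∫ x, f x := setIntegral_le_integral hf (Filter.Eventually.of_forall hf0)

section WithDensity

variable {α : Type*} [MeasurableSpace α] {ν : Measure α} {ρ : α → ℝ}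

theorem integral_withDensity_ofReal_s9 (hρ : AEMeasurable ρ ν) (hρ0 : 0 ≤ ρ) (g : α → ℝ) :
    ∫ x, g x ∂ν.withDensity (fun x => ENNReal.ofReal (ρ x)) = ∫ x, ρ x * g x ∂ν := by
  rw [integral_withDensity_eq_integral_toReal_smul₀ hρ.ennreal_ofReal
    (Filter.Eventually.of_forall fun _ => ENNReal.ofReal_lt_top)]
  simp only [ENNReal.toReal_ofReal (hρ0 _), smul_eq_mul]

theorem integrable_withDensity_ofReal_iff (hρ : AEMeasurable ρ ν) (hρ0 : 0 ≤ ρ) {g : α → ℝ} :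
    Integrable g (ν.withDensity fun x => ENNReal.ofReal (ρ x)) ↔
      Integrable (fun x => ρ x * g x) ν := by
  rw [integrable_withDensity_iff_integrable_smul₀' hρ.ennreal_ofReal
    (Filter.Eventually.of_forall fun _ => ENNReal.ofReal_lt_top)]
  simp only [ENNReal.toReal_ofReal (hρ0 _), smul_eq_mul]

theorem isProbabilityMeasure_withDensity_ofReal (hρ : Integrable ρ ν) (hρ0 : 0 ≤ ρ)
    (hρ1 : ∫ x, ρ x ∂ν = 1) :
    IsProbabilityMeasure (ν.withDensity fun x => ENNReal.ofReal (ρ x)) := by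
  constructor
  rw [withDensity_apply _ MeasurableSet.univ, Measure.restrict_univ,
    ← ofReal_integral_eq_lintegral_ofReal hρ (Filter.Eventually.of_forall hρ0), hρ1,
    ENNReal.ofReal_one]

end WithDensity

theorem integral_sq_sub_sq_integral_le {Ω : Type*} [MeasurableSpace Ω] {μ : Measure Ω}
    [IsProbabilityMeasure μ] {X : Ω → ℝ} (hX : MemLp X 2 μ) (c : ℝ) :
    ∫ ω, X ω ^ 2 ∂μ - (∫ ω, X ω ∂μ) ^ 2 ≤ ∫ ω, (X ω - c) ^ 2 ∂μ := by
  have h := ProbabilityTheory.variance_le_expectation_sq (μ := μ)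
    (X := fun ω => X ω - c) (hX.aestronglyMeasurable.sub aestronglyMeasurable_const)
  rwa [ProbabilityTheory.variance_sub_const hX.aestronglyMeasurable c,
    ProbabilityTheory.variance_eq_sub hX] at h

theorem integral_sq_sub_sq_integral_withDensity_le {f : ℝ → ℝ} (hf : Integrable f) (hf0 : 0 ≤ f)
    {Z : ℝ} (hZ : Z = ∫ x, f x) (hZ0 : 0 < Z) {μ : Measure ℝ}
    (hμ : μ = volume.withDensity fun x => ENNReal.ofReal (f x / Z)) {a : ℝ}
    (ha : Integrable fun x => (x - a) ^ 2 * f x) :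
    ∫ x, x ^ 2 ∂μ - (∫ x, x ∂μ) ^ 2 ≤ (∫ x, (x - a) ^ 2 * f x) / Z := by
  have hρ : Integrable fun x => f x / Z := hf.div_const Z
  have hρ0 : 0 ≤ fun x => f x / Z := fun x => div_nonneg (hf0 x) hZ0.le
  have : IsProbabilityMeasure μ := hμ ▸ isProbabilityMeasure_withDensity_ofReal hρ hρ0
    (by rw [integral_div, ← hZ, div_self hZ0.ne'])
  have hsq : Integrable (fun x => (x - a) ^ 2) μ := by
    rw [hμ, integrable_withDensity_ofReal_iff hρ.aemeasurable hρ0]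
    simpa only [div_mul_eq_mul_div, mul_comm] using ha.div_const Z
  have hL2 : MemLp (fun x => x) 2 μ := by
    convert ((memLp_two_iff_integrable_sq (by fun_prop)).mpr hsq).add (memLp_const a) using 1
    ext x
    simp
  calc ∫ x, x ^ 2 ∂μ - (∫ x, x ∂μ) ^ 2 ≤ ∫ x, (x - a) ^ 2 ∂μ :=
        integral_sq_sub_sq_integral_le hL2 a
    _ = (∫ x, (x - a) ^ 2 * f x) / Z := by
        rw [hμ, integral_withDensity_ofReal_s9 hρ.aemeasurable hρ0, ← integral_div]
        simp only [div_mul_eq_mul_div, mul_comm]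

section Potential

variable {V : ℝ → ℝ} {a β c h Rp Rm : ℝ}

theorem integral_sq_mul_exp_neg_le_of_superlinear (hint : Integrable fun x => exp (-V x))
    (hmin : ∀ x, V a ≤ V x) (hc : 0 < c) (hRp : 0 < Rp)
    (hsupp : ∀ t, Rp ≤ t → (c / max Rp Rm) * t - h ≤ V (a + t) - V a)
    (hsupm : ∀ t, Rm ≤ t → (c / max Rp Rm) * t - h ≤ V (a - t) - V a) :
    Integrable (fun x => (x - a) ^ 2 * exp (-V x)) ∧
      ∫ x, (x - a) ^ 2 * exp (-V x) ≤
        2 * exp (-V a) * max Rp Rm ^ 3 * (1 / 3 + 2 * exp h / c ^ 3) := by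
  set R := max Rp Rm
  have hR : 0 < R := lt_max_of_lt_left hRp
  have htail : ∀ x, R < |x - a| →
      exp (-V x) ≤ exp (-V a) * exp h * exp (-(c / R * |x - a|)) := by
    intro x hx
    rw [← exp_add, ← exp_add, exp_le_exp]
    rcases abs_cases (x - a) with ⟨habs, -⟩ | ⟨habs, -⟩ <;> rw [habs] at hx ⊢
    · have := hsupp (x - a) (by linarith [le_max_left Rp Rm])
      rw [add_sub_cancel] at this
      linarith
    · have := hsupm (-(x - a)) (by linarith [le_max_right Rp Rm])
      rw [neg_sub, sub_sub_cancel] at this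
      linarith
  obtain ⟨hI, hle⟩ := integral_sq_mul_le_of_le_exp_neg_abs hint.aestronglyMeasurable
    (fun x => (exp_pos _).le) hR.le (div_pos hc hR)
    (fun x _ => exp_le_exp.mpr (neg_le_neg (hmin x))) htail
  refine ⟨hI, hle.trans_eq ?_⟩
  field_simp
  ring

theorem mul_exp_neg_le_integral_of_level (hint : Integrable fun x => exp (-V x))
    (hRp : 0 ≤ Rp)
    (hlevp : ∀ u, 0 ≤ u → u ≤ Rp → V (a + u) - V a ≤ β)
    (hlevm : ∀ u, 0 ≤ u → u ≤ Rm → V (a - u) - V a ≤ β) :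
    max Rp Rm * (exp (-V a) * exp (-β)) ≤ ∫ x, exp (-V x) := by
  have hint0 : 0 ≤ fun x => exp (-V x) := fun x => (exp_pos _).le
  rcases max_choice Rp Rm with hmax | hmax <;> rw [hmax]
  · simpa using mul_le_integral_of_le_on_Icc hint hint0 (le_add_of_nonneg_right hRp)
      fun x hx => by
        have := hlevp (x - a) (by linarith [hx.1]) (by linarith [hx.2])
        rw [add_sub_cancel] at this
        rw [← exp_add, exp_le_exp]
        linarith
  · have hRm : 0 ≤ Rm := hmax ▸ hRp.trans (le_max_left Rp Rm)
    simpa using mul_le_integral_of_le_on_Icc hint hint0 (sub_le_self a hRm)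
      fun x hx => by
        have := hlevm (a - x) (by linarith [hx.2]) (by linarith [hx.1])
        rw [sub_sub_cancel] at this
        rw [← exp_add, exp_le_exp]
        linarith

theorem integral_sq_sub_sq_integral_le_of_superlinear {Z : ℝ} {μ : Measure ℝ}
    (hmin : ∀ x, V a ≤ V x) (hint : Integrable fun x => exp (-V x))
    (hZ : Z = ∫ x, exp (-V x))
    (hμ : μ = volume.withDensity fun x => ENNReal.ofReal (exp (-V x) / Z))
    (hc : 0 < c) (hRp : 0 < Rp)
    (hlevp : ∀ u, 0 ≤ u → u ≤ Rp → V (a + u) - V a ≤ β)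
    (hlevm : ∀ u, 0 ≤ u → u ≤ Rm → V (a - u) - V a ≤ β)
    (hsupp : ∀ t, Rp ≤ t → (c / max Rp Rm) * t - h ≤ V (a + t) - V a)
    (hsupm : ∀ t, Rm ≤ t → (c / max Rp Rm) * t - h ≤ V (a - t) - V a) :
    ∫ x, x ^ 2 ∂μ - (∫ x, x ∂μ) ^ 2 ≤ 2 * max Rp Rm ^ 2 * exp β * (1 / 3 + 2 * exp h / c ^ 3) := by
  obtain ⟨hI, hIle⟩ := integral_sq_mul_exp_neg_le_of_superlinear hint hmin hc hRp hsupp hsupm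
  have hmass := hZ ▸ mul_exp_neg_le_integral_of_level hint hRp.le hlevp hlevm
  have hR : 0 < max Rp Rm := lt_max_of_lt_left hRp
  have hZ0 : 0 < Z := lt_of_lt_of_le (by positivity) hmass
  calc _ ≤ (∫ x, (x - a) ^ 2 * exp (-V x)) / Z :=
        integral_sq_sub_sq_integral_withDensity_le hint (fun x => (exp_pos _).le) hZ hZ0 hμ hI
    _ ≤ 2 * exp (-V a) * max Rp Rm ^ 3 * (1 / 3 + 2 * exp h / c ^ 3) /
          (max Rp Rm * (exp (-V a) * exp (-β))) :=
        div_le_div₀ (by positivity) hIle (by positivity) hmass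
    _ = _ := by field_simp; rw [← exp_add, neg_add_cancel, exp_zero]

end Potential

theorem superlinear_radius_lower_bound_general
    (V : ℝ → ℝ) (a : ℝ) (hmin : ∀ x, V a ≤ V x)
    (hint : Integrable fun x => Real.exp (-V x))
    (Z : ℝ) (hZ : Z = ∫ x, Real.exp (-V x))
    (μ : Measure ℝ)
    (hμ : μ = volume.withDensity fun x => ENNReal.ofReal (Real.exp (-V x) / Z))
    (β c h Rp Rm : ℝ) (hc : 0 < c)
    (hRp : 0 < Rp)
    (hlevp : ∀ u, 0 ≤ u → u ≤ Rp → V (a + u) - V a ≤ β)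
    (hlevm : ∀ u, 0 ≤ u → u ≤ Rm → V (a - u) - V a ≤ β)
    (hsupp : ∀ t, Rp ≤ t → (c / max Rp Rm) * t - h ≤ V (a + t) - V a)
    (hsupm : ∀ t, Rm ≤ t → (c / max Rp Rm) * t - h ≤ V (a - t) - V a) :
    (1 / 2) * ((∫ x, x ^ 2 ∂μ) - (∫ x, x ∂μ) ^ 2) * Real.exp (-β) *
        (1 / 3 + (Real.exp h / c) * (1 + 2 / c + 2 / c ^ 2))⁻¹ ≤
      max (Rp ^ 2) (Rm ^ 2) := by
  have hvar := integral_sq_sub_sq_integral_le_of_superlinear hmin hint hZ hμ hc hRp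
    hlevp hlevm hsupp hsupm
  have hconst : 1 / 3 + 2 * exp h / c ^ 3 ≤ 1 / 3 + exp h / c * (1 + 2 / c + 2 / c ^ 2) := by
    have : exp h / c * (1 + 2 / c + 2 / c ^ 2) =
        2 * exp h / c ^ 3 + (exp h / c + 2 * exp h / c ^ 2) := by ring
    have : 0 ≤ exp h / c + 2 * exp h / c ^ 2 := by positivity
    linarith
  have hR2 : max Rp Rm ^ 2 ≤ max (Rp ^ 2) (Rm ^ 2) := by
    rcases max_choice Rp Rm with hmax | hmax <;> simp [hmax]
  calc _ ≤ 1 / 2 * (2 * max Rp Rm ^ 2 * exp β * (1 / 3 + 2 * exp h / c ^ 3)) * exp (-β) *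
        (1 / 3 + exp h / c * (1 + 2 / c + 2 / c ^ 2))⁻¹ := by gcongr
    _ = max Rp Rm ^ 2 *
          ((1 / 3 + 2 * exp h / c ^ 3) / (1 / 3 + exp h / c * (1 + 2 / c + 2 / c ^ 2))) := by
        rw [exp_neg]; field_simp
    _ ≤ max Rp Rm ^ 2 :=
        mul_le_of_le_one_right (sq_nonneg _) (div_le_one_of_le₀ hconst (by positivity))
    _ ≤ _ := hR2

/-- Let `μ = Z⁻¹ e^{-V} dx` be a centered probability measure on `ℝ`, `V`
attaining its minimum at `a`, and `V` `β`-superlinear with constants `c_β > 0`, `h_β ≥ 0`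
relative to `R₊(β), R₋(β) > 0` and `R(β) = max(R₊, R₋)`.  Then
`R₊² ∨ R₋² ≥ (1/2) Var_μ(x) e^{-β} (1/3 + (e^{h_β}/c_β)(1 + 2/c_β + 2/c_β²))⁻¹`. -/
theorem superlinear_radius_lower_bound
    (V : ℝ → ℝ) (hVm : Measurable V) (a : ℝ) (hmin : ∀ x, V a ≤ V x)
    (hint : Integrable fun x => Real.exp (-V x))
    (Z : ℝ) (hZ : Z = ∫ x, Real.exp (-V x))
    (μ : Measure ℝ)
    (hμ : μ = volume.withDensity fun x => ENNReal.ofReal (Real.exp (-V x) / Z))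
    (hcent : ∫ x, x ∂μ = 0)
    (β c h Rp Rm : ℝ) (hβ : 0 < β) (hc : 0 < c) (hh : 0 ≤ h)
    (hRp : 0 < Rp) (hRm : 0 < Rm)
    (hlevp : ∀ u, 0 ≤ u → u ≤ Rp → V (a + u) - V a ≤ β)
    (hlevm : ∀ u, 0 ≤ u → u ≤ Rm → V (a - u) - V a ≤ β)
    (hsupp : ∀ t, Rp ≤ t → (c / max Rp Rm) * t - h ≤ V (a + t) - V a)
    (hsupm : ∀ t, Rm ≤ t → (c / max Rp Rm) * t - h ≤ V (a - t) - V a) :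
    (1 / 2) * ((∫ x, x ^ 2 ∂μ) - (∫ x, x ∂μ) ^ 2) * Real.exp (-β) *
        (1 / 3 + (Real.exp h / c) * (1 + 2 / c + 2 / c ^ 2))⁻¹ ≤
      max (Rp ^ 2) (Rm ^ 2) :=
  superlinear_radius_lower_bound_general V a hmin hint Z hZ μ hμ β c h Rp Rm hc hRp hlevp hlevm
    hsupp hsupm
end
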